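/- Let c ∈ [0, 1], let θ = 2·arcsin(√c), let β ∈ ℝ, and let M'(c) be the complex 2×2 matrix !![2c−1, 2·√(c·(1−c)); 2·√(c·(1−c)), 1−2c] (the warm-start mixer with off-diagonal entries multiplied by −1). Then exp(−(i·β) • M'(c)) = R_Y(−θ) · R_Z(−2β) · R_Y(θ). -/

import Mathlib

open Matrix

/-- The single-qubit rotation `R_Y(θ)`. -/
noncomputable def RY (θ : ℝ) : Matrix (Fin 2) (Fin 2) ℂ :=
  !![((Real.cos (θ / 2) : ℝ) : ℂ), ((-Real.sin (θ / 2) : ℝ) : ℂ);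
     ((Real.sin (θ / 2) : ℝ) : ℂ), ((Real.cos (θ / 2) : ℝ) : ℂ)]

/-- The single-qubit rotation `R_Z(φ)`. -/
noncomputable def RZ (φ : ℝ) : Matrix (Fin 2) (Fin 2) ℂ :=
  !![Complex.exp (-(Complex.I * φ / 2)), 0; 0, Complex.exp (Complex.I * φ / 2)]

/-!
Since `cos θ = 1 - 2c` and `sin θ = 2√(c(1-c))`, the modified mixer is `-R_Y(-θ) Z R_Y(θ)` with
`Z = diag(1, -1)`. As `R_Y(-θ)` and `R_Y(θ)` are mutually inverse, the exponential passes through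
the conjugation, and `exp(iβ Z) = R_Z(-2β)`.
-/

namespace Real

theorem cos_two_mul_arcsin {x : ℝ} (hx₁ : -1 ≤ x) (hx₂ : x ≤ 1) :
    cos (2 * arcsin x) = 1 - 2 * x ^ 2 := by
  rw [cos_two_mul, cos_arcsin, sq_sqrt (by nlinarith)]
  ring

theorem sin_two_mul_arcsin {x : ℝ} (hx₁ : -1 ≤ x) (hx₂ : x ≤ 1) :
    sin (2 * arcsin x) = 2 * x * √(1 - x ^ 2) := by
  rw [sin_two_mul, sin_arcsin hx₁ hx₂, cos_arcsin]

theorem cos_two_mul_arcsin_sqrt {c : ℝ} (hc₀ : 0 ≤ c) (hc₁ : c ≤ 1) :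
    cos (2 * arcsin √c) = 1 - 2 * c := by
  rw [cos_two_mul_arcsin (by linarith [sqrt_nonneg c]) (sqrt_le_one.mpr hc₁), sq_sqrt hc₀]

theorem sin_two_mul_arcsin_sqrt {c : ℝ} (hc₀ : 0 ≤ c) (hc₁ : c ≤ 1) :
    sin (2 * arcsin √c) = 2 * √(c * (1 - c)) := by
  rw [sin_two_mul_arcsin (by linarith [sqrt_nonneg c]) (sqrt_le_one.mpr hc₁), sq_sqrt hc₀,
    sqrt_mul hc₀, mul_assoc]

end Real

theorem RY_zero : RY 0 = 1 := by
  ext i j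
  fin_cases i <;> fin_cases j <;> simp [RY]

theorem RY_add (a b : ℝ) : RY (a + b) = RY a * RY b := by
  have ha : (a + b) / 2 = a / 2 + b / 2 := add_div a b 2
  ext i j
  fin_cases i <;> fin_cases j <;>
    simp [RY, ha, Real.cos_add, Real.sin_add, mul_apply, Fin.sum_univ_two] <;> ring

theorem RY_neg_mul_RY (θ : ℝ) : RY (-θ) * RY θ = 1 := by
  rw [← RY_add, neg_add_cancel, RY_zero]

theorem RY_mul_RY_neg (θ : ℝ) : RY θ * RY (-θ) = 1 := by
  rw [← RY_add, add_neg_cancel, RY_zero]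

theorem exp_RY_conj (θ : ℝ) (A : Matrix (Fin 2) (Fin 2) ℂ) :
    NormedSpace.exp (RY (-θ) * A * RY θ) = RY (-θ) * NormedSpace.exp A * RY θ :=
  Matrix.exp_units_conj ⟨RY (-θ), RY θ, RY_neg_mul_RY θ, RY_mul_RY_neg θ⟩ A

def pauliZ : Matrix (Fin 2) (Fin 2) ℂ := !![1, 0; 0, -1]

theorem smul_pauliZ (z : ℂ) : z • pauliZ = diagonal ![z, -z] := by
  ext i j
  fin_cases i <;> fin_cases j <;> simp [pauliZ]

theorem exp_smul_pauliZ (z : ℂ) :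
    NormedSpace.exp (z • pauliZ) = !![Complex.exp z, 0; 0, Complex.exp (-z)] := by
  rw [smul_pauliZ, exp_diagonal]
  ext i j
  fin_cases i <;> fin_cases j <;> simp [← Complex.exp_eq_exp_ℂ]

theorem RZ_eq_exp_smul_pauliZ (φ : ℝ) :
    RZ φ = NormedSpace.exp ((-(Complex.I * φ / 2)) • pauliZ) := by
  rw [exp_smul_pauliZ, neg_neg, RZ]

theorem RY_neg_mul_pauliZ_mul_RY (θ : ℝ) :
    RY (-θ) * pauliZ * RY θ =
      !![((Real.cos θ : ℝ) : ℂ), -((Real.sin θ : ℝ) : ℂ);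
         -((Real.sin θ : ℝ) : ℂ), -((Real.cos θ : ℝ) : ℂ)] := by
  have hθ : θ = 2 * (θ / 2) := by ring
  rw [hθ, Real.cos_two_mul', Real.sin_two_mul, ← hθ]
  simp only [RY, neg_div, Real.cos_neg, Real.sin_neg, neg_neg]
  ext i j
  fin_cases i <;> fin_cases j <;>
    simp [pauliZ, mul_apply, Fin.sum_univ_two] <;> ring

theorem ws_modified_mixer_exp_rotation_decomposition (c : ℝ) (hc : c ∈ Set.Icc (0 : ℝ) 1)
    (θ : ℝ) (hθ : θ = 2 * Real.arcsin (Real.sqrt c)) (β : ℝ)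
    (M : Matrix (Fin 2) (Fin 2) ℂ)
    (hM : M = !![((2 * c - 1 : ℝ) : ℂ), ((2 * Real.sqrt (c * (1 - c)) : ℝ) : ℂ);
                 ((2 * Real.sqrt (c * (1 - c)) : ℝ) : ℂ), ((1 - 2 * c : ℝ) : ℂ)]) :
    NormedSpace.exp ((-(Complex.I * β)) • M) = RY (-θ) * RZ (-2 * β) * RY θ := by
  have hM' : M = -(RY (-θ) * pauliZ * RY θ) := by
    rw [RY_neg_mul_pauliZ_mul_RY, hθ, Real.cos_two_mul_arcsin_sqrt hc.1 hc.2,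
      Real.sin_two_mul_arcsin_sqrt hc.1 hc.2, hM]
    ext i j
    fin_cases i <;> fin_cases j <;> simp
  rw [hM', smul_neg, ← neg_smul, neg_neg, ← smul_mul_assoc, ← mul_smul_comm, exp_RY_conj,
    RZ_eq_exp_smul_pauliZ]
  congr 4
  push_cast
  ring
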